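/- Let f : G → G' be a (Λ, κ)-quasi-isometry between finitely generated groups with word metrics, let C be a subgroup of G and C' a subgroup of G', and suppose the Hausdorff distance between f(C) and C' is finite. Then C is finitely generated if and only if C' is finitely generated. -/

import Mathlib

/-!
A subgroup `C` is finitely generated iff for some `A` any two elements of `C` are joined by a
chain in `C` whose steps have word length at most `A`: a finite generating set gives such chains,
and conversely `C` is generated by its finitely many elements of length at most `A`. Such chains
are transported along the correspondence `c ~ c'` iff `d(f c, c') ≤ M` between `C` and `C'`:
the upper quasi-isometry bound turns an `A`-chain in `C` into a `(ΛA + κ + 2M)`-chain in `C'`,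
and the lower bound turns an `A`-chain in `C'` into a `Λ(A + κ + 2M)`-chain in `C`.
-/

/-- The word length of `g` with respect to a finite generating set `S`. -/
noncomputable def wlen {G : Type*} [Group G] (S : Finset G) (g : G) : ℕ :=
  sInf {n | ∃ l : List G, l.length = n ∧ (∀ x ∈ l, x ∈ S ∨ x⁻¹ ∈ S) ∧ l.prod = g}

/-- The word metric on `G` with respect to `S`. -/
noncomputable def wdist {G : Type*} [Group G] (S : Finset G) (g h : G) : ℕ :=
  wlen S (g⁻¹ * h)

open Relation
open scoped Pointwise

section WordMetric

variable {G : Type*} [Group G] (S : Finset G)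

theorem wlen_le_length {g : G} {l : List G} (hl : ∀ x ∈ l, x ∈ S ∨ x⁻¹ ∈ S)
    (hp : l.prod = g) : wlen S g ≤ l.length :=
  Nat.sInf_le ⟨l, rfl, hl, hp⟩

theorem wdist_self (g : G) : wdist S g g = 0 :=
  Nat.le_zero.mp (wlen_le_length S (l := []) (by simp) (by simp))

theorem wdist_mul_right (a t : G) : wdist S a (a * t) = wlen S t := by
  simp [wdist]

theorem wdist_mul_left (x a b : G) : wdist S (x * a) (x * b) = wdist S a b := by
  simp [wdist, mul_assoc]

variable {S} (hS : Subgroup.closure (S : Set G) = ⊤)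
include hS

theorem exists_word_length_eq_wlen (g : G) :
    ∃ l : List G, l.length = wlen S g ∧ (∀ x ∈ l, x ∈ S ∨ x⁻¹ ∈ S) ∧ l.prod = g := by
  have hg : g ∈ (Subgroup.closure (S : Set G)).toSubmonoid := hS ▸ Subgroup.mem_top g
  rw [Subgroup.closure_toSubmonoid] at hg
  obtain ⟨l, hl, hp⟩ := Submonoid.exists_list_of_mem_closure hg
  exact Nat.sInf_mem (s := {n | ∃ l : List G, l.length = n ∧ (∀ x ∈ l, x ∈ S ∨ x⁻¹ ∈ S) ∧
    l.prod = g}) ⟨l.length, l, rfl, hl, hp⟩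

theorem wlen_mul_le (a b : G) : wlen S (a * b) ≤ wlen S a + wlen S b := by
  obtain ⟨la, hla, hSa, rfl⟩ := exists_word_length_eq_wlen hS a
  obtain ⟨lb, hlb, hSb, rfl⟩ := exists_word_length_eq_wlen hS b
  rw [← hla, ← hlb, ← List.length_append, ← List.prod_append]
  exact wlen_le_length S (by simpa [or_imp, forall_and] using ⟨hSa, hSb⟩) rfl

theorem wlen_inv (g : G) : wlen S g⁻¹ = wlen S g := by
  suffices h : ∀ g : G, wlen S g⁻¹ ≤ wlen S g from le_antisymm (h g) (by simpa using h g⁻¹)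
  intro g
  obtain ⟨l, hl, hSl, rfl⟩ := exists_word_length_eq_wlen hS g
  rw [← hl, List.prod_inv_reverse]
  refine (wlen_le_length S (fun x hx => ?_) rfl).trans (by simp)
  obtain ⟨y, hy, rfl⟩ : ∃ y ∈ l, y⁻¹ = x := by simpa using hx
  simpa [or_comm] using hSl y hy

theorem wdist_comm (a b : G) : wdist S a b = wdist S b a := by
  rw [wdist, ← wlen_inv hS, mul_inv_rev, inv_inv, wdist]

theorem wdist_triangle (a b c : G) : wdist S a c ≤ wdist S a b + wdist S b c := by
  simpa [wdist, mul_assoc] using wlen_mul_le hS (a⁻¹ * b) (b⁻¹ * c)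

theorem wdist_le_add_of_near {x y x' y' : G} {M : ℕ} (hx : wdist S x x' ≤ M)
    (hy : wdist S y y' ≤ M) : wdist S x' y' ≤ wdist S x y + 2 * M := by
  have h₁ := wdist_triangle hS x' x y'
  have h₂ := wdist_triangle hS x y y'
  rw [wdist_comm hS x' x] at h₁
  omega

theorem finite_setOf_wlen_le (n : ℕ) : {g : G | wlen S g ≤ n}.Finite := by
  have : Finite ↥((S : Set G) ∪ (S : Set G)⁻¹) :=
    (S.finite_toSet.union S.finite_toSet.inv).to_subtype
  refine ((List.finite_length_le ↥((S : Set G) ∪ (S : Set G)⁻¹) n).image fun l => (l.map Subtype.val).prod).subset ?_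
  intro g hg
  obtain ⟨l, hl, hSl, rfl⟩ := exists_word_length_eq_wlen hS g
  lift l to List ↥((S : Set G) ∪ (S : Set G)⁻¹) using hSl
  rw [Set.mem_ofPred, ← hl, List.length_map] at hg
  exact ⟨l, hg, rfl⟩

end WordMetric

theorem Relation.reflTransGen_of_correspondence {α β : Type*} {r : α → α → Prop}
    {s : β → β → Prop} (R : α → β → Prop) (hα : ∀ a, ∃ b, R a b) (hβ : ∀ b, ∃ a, R a b)
    (hr : ∀ a, r a a) (hrs : ∀ a₁ a₂ b₁ b₂, r a₁ a₂ → R a₁ b₁ → R a₂ b₂ → s b₁ b₂)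
    (h : ∀ a₁ a₂, ReflTransGen r a₁ a₂) (b₁ b₂ : β) : ReflTransGen s b₁ b₂ := by
  choose p hp using hα
  obtain ⟨a₁, h₁⟩ := hβ b₁
  obtain ⟨a₂, h₂⟩ := hβ b₂
  have hchain : ReflTransGen s (p a₁) (p a₂) :=
    (h a₁ a₂).lift p fun x y hxy => hrs x y _ _ hxy (hp x) (hp y)
  exact (hchain.head (hrs _ _ _ _ (hr a₁) h₁ (hp a₁))).tail (hrs _ _ _ _ (hr a₂) (hp a₂) h₂)

section CoarselyConnected

variable {G : Type*} [Group G] {S : Finset G}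

def IsCoarselyConnected (S : Finset G) (C : Subgroup G) (A : ℕ) : Prop :=
  ∀ a b : C, ReflTransGen (fun x y : C => wdist S x y ≤ A) a b

variable {C : Subgroup G} {A : ℕ}

theorem isCoarselyConnected_of_reflTransGen_one
    (h : ∀ c : C, ReflTransGen (fun x y : C => wdist S x y ≤ A) 1 c) :
    IsCoarselyConnected S C A := fun a b => by
  simpa [Function.onFun] using (h (a⁻¹ * b)).lift (p := fun x y : C => wdist S x y ≤ A) (a * ·)
    fun x y hxy => by simpa [Function.onFun, wdist_mul_left] using hxy

theorem reflTransGen_one_of_mem_closure (hS : Subgroup.closure (S : Set G) = ⊤) {T : Set G}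
    (hT : ∀ t ∈ T, wlen S t ≤ A) (c : Subgroup.closure T) :
    ReflTransGen (fun x y : Subgroup.closure T => wdist S x y ≤ A) 1 c := by
  obtain ⟨c, hc⟩ := c
  induction hc using Subgroup.closure_induction_right with
  | one => rfl
  | mul_right x hx y hy ih => exact ih.tail (by simpa [wdist_mul_right] using hT y hy)
  | mul_inv_cancel x hx y hy ih =>
    exact ih.tail (by simpa [wdist_mul_right, wlen_inv hS] using hT y hy)

theorem IsCoarselyConnected.closure_setOf_wlen_le_eq (h : IsCoarselyConnected S C A) :
    Subgroup.closure {g | g ∈ C ∧ wlen S g ≤ A} = C := by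
  refine le_antisymm ((Subgroup.closure_le C).mpr fun g hg => hg.1) fun c hc => ?_
  suffices key : ∀ b : C, ReflTransGen (fun x y : C => wdist S x y ≤ A) 1 b →
      (b : G) ∈ Subgroup.closure {g | g ∈ C ∧ wlen S g ≤ A} from key ⟨c, hc⟩ (h 1 _)
  intro b hb
  induction hb with
  | refl => exact one_mem _
  | @tail x y _ hxy ih =>
    simpa using mul_mem ih (Subgroup.subset_closure ⟨mul_mem (inv_mem x.2) y.2, hxy⟩)

theorem fg_iff_exists_isCoarselyConnected (hS : Subgroup.closure (S : Set G) = ⊤)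
    (C : Subgroup G) : C.FG ↔ ∃ A, IsCoarselyConnected S C A := by
  constructor
  · rintro ⟨T, rfl⟩
    exact ⟨T.sup (wlen S), isCoarselyConnected_of_reflTransGen_one
      (reflTransGen_one_of_mem_closure hS fun t ht => Finset.le_sup ht)⟩
  · rintro ⟨A, hA⟩
    rw [Subgroup.fg_iff]
    exact ⟨_, hA.closure_setOf_wlen_le_eq, (finite_setOf_wlen_le hS A).subset fun g hg => hg.2⟩

theorem IsCoarselyConnected.of_correspondence {G' : Type*} [Group G'] {S' : Finset G'}
    {C' : Subgroup G'} {B : ℕ} (R : C → C' → Prop) (hC : ∀ c, ∃ c', R c c')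
    (hC' : ∀ c', ∃ c, R c c')
    (hAB : ∀ (a₁ a₂ : C) (b₁ b₂ : C'), wdist S a₁ a₂ ≤ A → R a₁ b₁ → R a₂ b₂ → wdist S' b₁ b₂ ≤ B)
    (h : IsCoarselyConnected S C A) : IsCoarselyConnected S' C' B :=
  reflTransGen_of_correspondence R hC hC' (fun a => by simp [wdist_self]) hAB h

end CoarselyConnected

section QuasiIsometry

variable {G G' : Type*} [Group G] [Group G'] {S : Finset G} {S' : Finset G'}
  (hS' : Subgroup.closure (S' : Set G') = ⊤) {f : G → G'} {Λ κ : ℝ}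
  {a₁ a₂ : G} {b₁ b₂ : G'} {A M : ℕ}
include hS'

theorem wdist_le_of_near_images (hΛ : 0 ≤ Λ)
    (hf : (wdist S' (f a₁) (f a₂) : ℝ) ≤ Λ * wdist S a₁ a₂ + κ) (ha : wdist S a₁ a₂ ≤ A)
    (h₁ : wdist S' (f a₁) b₁ ≤ M) (h₂ : wdist S' (f a₂) b₂ ≤ M) :
    wdist S' b₁ b₂ ≤ ⌈Λ * A + κ + 2 * M⌉₊ := by
  have hb : (wdist S' b₁ b₂ : ℝ) ≤ wdist S' (f a₁) (f a₂) + 2 * M := by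
    exact_mod_cast wdist_le_add_of_near hS' h₁ h₂
  have ha' : Λ * wdist S a₁ a₂ ≤ Λ * A := by gcongr
  exact Nat.cast_le.mp ((by linarith : (wdist S' b₁ b₂ : ℝ) ≤ _).trans (Nat.le_ceil _))

theorem wdist_le_of_images_near (hΛ : 0 < Λ)
    (hf : (wdist S a₁ a₂ : ℝ) / Λ - κ ≤ wdist S' (f a₁) (f a₂)) (hb : wdist S' b₁ b₂ ≤ A)
    (h₁ : wdist S' (f a₁) b₁ ≤ M) (h₂ : wdist S' (f a₂) b₂ ≤ M) :
    wdist S a₁ a₂ ≤ ⌈Λ * (A + κ + 2 * M)⌉₊ := by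
  have hfa : (wdist S' (f a₁) (f a₂) : ℝ) ≤ A + 2 * M := by
    rw [wdist_comm hS'] at h₁ h₂
    exact_mod_cast (wdist_le_add_of_near hS' h₁ h₂).trans (by omega)
  have ha : (wdist S a₁ a₂ : ℝ) ≤ Λ * (A + κ + 2 * M) := by
    rw [← div_le_iff₀' hΛ]; linarith
  exact Nat.cast_le.mp (ha.trans (Nat.le_ceil _))

end QuasiIsometry

theorem stmt_13_general {G G' : Type*} [Group G] [Group G']
    (S : Finset G) (hS : Subgroup.closure (S : Set G) = ⊤)
    (S' : Finset G') (hS' : Subgroup.closure (S' : Set G') = ⊤)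
    (f : G → G') (Λ κ : ℝ) (hΛ : 1 ≤ Λ)
    (hqi : ∀ x₁ x₂ : G,
      (wdist S x₁ x₂ : ℝ) / Λ - κ ≤ (wdist S' (f x₁) (f x₂) : ℝ) ∧
      (wdist S' (f x₁) (f x₂) : ℝ) ≤ Λ * (wdist S x₁ x₂ : ℝ) + κ)
    (C : Subgroup G) (C' : Subgroup G')
    (hHaus : ∃ M : ℕ,
      (∀ c ∈ C, ∃ c' ∈ C', wdist S' (f c) c' ≤ M) ∧
      (∀ c' ∈ C', ∃ c ∈ C, wdist S' (f c) c' ≤ M)) :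
    C.FG ↔ C'.FG := by
  obtain ⟨M, hfC, hC'f⟩ := hHaus
  let R : C → C' → Prop := fun c c' => wdist S' (f c) c' ≤ M
  have hR : ∀ c, ∃ c', R c c' := fun ⟨c, hc⟩ => by
    obtain ⟨c', hc', h⟩ := hfC c hc
    exact ⟨⟨c', hc'⟩, h⟩
  have hR' : ∀ c', ∃ c, R c c' := fun ⟨c', hc'⟩ => by
    obtain ⟨c, hc, h⟩ := hC'f c' hc'
    exact ⟨⟨c, hc⟩, h⟩
  rw [fg_iff_exists_isCoarselyConnected hS, fg_iff_exists_isCoarselyConnected hS']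
  constructor
  · rintro ⟨A, hA⟩
    exact ⟨_, hA.of_correspondence R hR hR' fun a₁ a₂ b₁ b₂ ha h₁ h₂ =>
      wdist_le_of_near_images hS' (by linarith) (hqi a₁ a₂).2 ha h₁ h₂⟩
  · rintro ⟨A, hA⟩
    exact ⟨_, hA.of_correspondence (flip R) hR' hR fun b₁ b₂ a₁ a₂ hb h₁ h₂ =>
      wdist_le_of_images_near hS' (by linarith) (hqi a₁ a₂).1 hb h₁ h₂⟩

/-- If `f : G → G'` is a `(Λ, κ)`-quasi-isometry between finitely generated groups
(with word metrics), `C ≤ G`, `C' ≤ G'`, and the Hausdorff distance between `f(C)`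
and `C'` is finite, then `C` is finitely generated iff `C'` is. -/
theorem stmt_13 {G G' : Type*} [Group G] [Group G']
    (S : Finset G) (hS : Subgroup.closure (S : Set G) = ⊤)
    (S' : Finset G') (hS' : Subgroup.closure (S' : Set G') = ⊤)
    (f : G → G') (Λ κ : ℝ) (hΛ : 1 ≤ Λ) (hκ : 0 ≤ κ)
    (hqi : ∀ x₁ x₂ : G,
      (wdist S x₁ x₂ : ℝ) / Λ - κ ≤ (wdist S' (f x₁) (f x₂) : ℝ) ∧
      (wdist S' (f x₁) (f x₂) : ℝ) ≤ Λ * (wdist S x₁ x₂ : ℝ) + κ)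
    (honto : ∀ y : G', ∃ x : G, (wdist S' y (f x) : ℝ) ≤ κ)
    (C : Subgroup G) (C' : Subgroup G')
    (hHaus : ∃ M : ℕ,
      (∀ c ∈ C, ∃ c' ∈ C', wdist S' (f c) c' ≤ M) ∧
      (∀ c' ∈ C', ∃ c ∈ C, wdist S' (f c) c' ≤ M)) :
    C.FG ↔ C'.FG :=
  stmt_13_general S hS S' hS' f Λ κ hΛ hqi C C' hHaus
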